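/- Let g ≥ 1 be odd. An element f ∈ ℂ[α,γ] is a unit modulo the ideal J_g^- (i.e., its image in ℂ[α,γ]/J_g^- is invertible) if and only if f(4(g−2j), 0) ≠ 0 and f(−4(g−2j), 0) ≠ 0 for every j = 1, …, (g−1)/2. -/

import Mathlib

open MvPolynomial

/-- ζ_k^- ∈ ℂ[α,γ] (variables: X 0 = α, X 1 = γ):
    ζ_{k+1}^- = α ζ_k^- + 2k(k−1) γ ζ_{k−2}^- for k even, and
    ζ_{k+1}^- = α ζ_k^- − 16k² ζ_{k−1}^- + 2k(k−1) γ ζ_{k−2}^- for k odd. -/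
noncomputable def zm : ℕ → MvPolynomial (Fin 2) ℂ
  | 0 => 1
  | 1 => X 0
  | 2 => X 0 * zm 1 - C 16 * zm 0
  | (n + 3) =>
      if n % 2 = 0 then
        X 0 * zm (n + 2) + C (2 * ((n : ℂ) + 2) * ((n : ℂ) + 1)) * X 1 * zm n
      else
        X 0 * zm (n + 2) - C (16 * ((n : ℂ) + 2) ^ 2) * zm (n + 1)
          + C (2 * ((n : ℂ) + 2) * ((n : ℂ) + 1)) * X 1 * zm n

/-- ζ_k^- for an integer index k, with ζ_k^- = 0 for k < 0. -/
noncomputable def zmZ (k : ℤ) : MvPolynomial (Fin 2) ℂ :=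
  if k < 0 then 0 else zm k.toNat

/-- J_g^- = (ζ_g^-, ζ_{g+1}^-, ζ_{g+2}^-) ⊆ ℂ[α,γ]. -/
noncomputable def Jm (g : ℕ) : Ideal (MvPolynomial (Fin 2) ℂ) :=
  Ideal.span {zm g, zm (g + 1), zm (g + 2)}

/-!
By the Nullstellensatz, `f` is a unit modulo `J_g^-` iff it has no zero on the zero locus of
`J_g^-`. Off the line `γ = 0` the recurrence can be run backwards, since the coefficient
`2 (n + 2) (n + 1) γ` of `ζ_n^-` in `ζ_{n+3}^-` is nonzero; three consecutive zeros thus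
propagate down to `ζ_0^- = 1`, so the locus lies on `γ = 0`. There the recurrence decouples:
`ζ_{2m+1}^-(a, 0) = a ζ_{2m}^-(a, 0)` and `ζ_{2m}^-(a, 0) = ∏_{i<m} (a² - (4 (2i + 1))²)`.
Hence for `g = 2m + 1` the locus is `{(±4 (2i + 1), 0) | i < m}`, and `i = m - j` turns it
into the points `(±4 (g - 2j), 0)`, `1 ≤ j ≤ m`.
-/

namespace MvPolynomial

variable {K σ : Type*} [Field K] [IsAlgClosed K] [Finite σ]

theorem isUnit_quotient_mk_iff_forall_mem_zeroLocus {I : Ideal (MvPolynomial σ K)}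
    {f : MvPolynomial σ K} :
    IsUnit (Ideal.Quotient.mk I f) ↔ ∀ x ∈ zeroLocus K I, eval x f ≠ 0 := by
  constructor
  · intro hf x hx
    have hI : ∀ p ∈ I, eval x p = 0 := fun p hp => by simpa using hx p hp
    simpa using hf.map (Ideal.Quotient.lift I (eval x) hI)
  · contrapose!
    intro hf
    obtain ⟨M, hM, hfM⟩ := exists_max_ideal_of_mem_nonunits hf
    obtain ⟨x, hx⟩ := eq_vanishingIdeal_singleton_of_isMaximal K
      (Ideal.comap_isMaximal_of_surjective _ Ideal.Quotient.mk_surjective (K := M))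
    have hIM : I ≤ vanishingIdeal K {x} := hx ▸ fun p hp => by
      simp [Ideal.Quotient.eq_zero_iff_mem.mpr hp]
    refine ⟨x, Set.singleton_subset_iff.mp (le_zeroLocus_iff_le_vanishingIdeal.mpr hIM), ?_⟩
    simpa using (mem_vanishingIdeal_singleton_iff x f).mp (hx ▸ hfM)

end MvPolynomial

lemma mem_zeroLocus_Jm_iff {g : ℕ} {x : Fin 2 → ℂ} :
    x ∈ zeroLocus ℂ (Jm g) ↔
      eval x (zm g) = 0 ∧ eval x (zm (g + 1)) = 0 ∧ eval x (zm (g + 2)) = 0 := by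
  simp [Jm, zeroLocus_span]

lemma eval_zm_add_three (x : Fin 2 → ℂ) (n : ℕ) :
    eval x (zm (n + 3)) =
      x 0 * eval x (zm (n + 2))
        - (if n % 2 = 0 then 0 else 16 * ((n : ℂ) + 2) ^ 2) * eval x (zm (n + 1))
        + 2 * ((n : ℂ) + 2) * ((n : ℂ) + 1) * x 1 * eval x (zm n) := by
  rw [zm]
  split <;> simp

lemma eval_zm_eq_zero_of_succ {x : Fin 2 → ℂ} (hx : x 1 ≠ 0) {n : ℕ}
    (h1 : eval x (zm (n + 1)) = 0) (h2 : eval x (zm (n + 2)) = 0)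
    (h3 : eval x (zm (n + 3)) = 0) : eval x (zm n) = 0 := by
  rw [eval_zm_add_three, h1, h2] at h3
  have hc : 2 * ((n : ℂ) + 2) * ((n : ℂ) + 1) * x 1 ≠ 0 := by
    refine mul_ne_zero (mul_ne_zero (mul_ne_zero two_ne_zero ?_) ?_) hx <;> norm_cast
  simpa [hc] using h3

lemma eval_snd_eq_zero_of_mem_zeroLocus_Jm {g : ℕ} {x : Fin 2 → ℂ}
    (hx : x ∈ zeroLocus ℂ (Jm g)) : x 1 = 0 := by
  by_contra hx1
  have hdescent : ∀ n, eval x (zm n) = 0 → eval x (zm (n + 1)) = 0 →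
      eval x (zm (n + 2)) = 0 → eval x (zm 0) = 0 := by
    intro n
    induction n with
    | zero => exact fun h _ _ => h
    | succ n ih => exact fun h1 h2 h3 => ih (eval_zm_eq_zero_of_succ hx1 h1 h2 h3) h1 h2
  obtain ⟨h0, h1, h2⟩ := mem_zeroLocus_Jm_iff.mp hx
  simpa [zm] using hdescent g h0 h1 h2

section LineGammaZero

variable (a : ℂ)

lemma eval_zm_two_mul_add_one (m : ℕ) :
    eval ![a, 0] (zm (2 * m + 1)) = a * eval ![a, 0] (zm (2 * m)) := by
  cases m with
  | zero => simp [zm]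
  | succ k =>
    rw [show 2 * (k + 1) + 1 = 2 * k + 3 by ring, eval_zm_add_three, mul_add_one 2 k]
    simp

lemma eval_zm_two_mul_add_two (m : ℕ) :
    eval ![a, 0] (zm (2 * m + 2)) =
      (a ^ 2 - (4 * (2 * m + 1)) ^ 2) * eval ![a, 0] (zm (2 * m)) := by
  cases m with
  | zero => simp [zm]; ring
  | succ k =>
    rw [show 2 * (k + 1) + 2 = (2 * k + 1) + 3 by ring, eval_zm_add_three,
      show 2 * k + 1 + 2 = 2 * (k + 1) + 1 by ring, show 2 * k + 1 + 1 = 2 * (k + 1) by ring,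
      eval_zm_two_mul_add_one]
    simp [Nat.add_mod]
    ring

lemma eval_zm_two_mul (m : ℕ) :
    eval ![a, 0] (zm (2 * m)) = ∏ i ∈ Finset.range m, (a ^ 2 - (4 * (2 * i + 1)) ^ 2) := by
  induction m with
  | zero => simp [zm]
  | succ m ih => rw [Finset.prod_range_succ, ← ih, mul_add_one, eval_zm_two_mul_add_two, mul_comm]

lemma eval_zm_two_mul_eq_zero_iff {m : ℕ} :
    eval ![a, 0] (zm (2 * m)) = 0 ↔ ∃ i < m, a = 4 * (2 * i + 1) ∨ a = -4 * (2 * i + 1) := by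
  simp [eval_zm_two_mul, Finset.prod_eq_zero_iff, sub_eq_zero, sq_eq_sq_iff_eq_or_eq_neg]

end LineGammaZero

lemma vec_zero_mem_zeroLocus_Jm_two_mul_add_one_iff (a : ℂ) (m : ℕ) :
    ![a, 0] ∈ zeroLocus ℂ (Jm (2 * m + 1)) ↔ eval ![a, 0] (zm (2 * m)) = 0 := by
  rw [mem_zeroLocus_Jm_iff, show 2 * m + 1 + 1 = 2 * m + 2 by ring,
    show 2 * m + 1 + 2 = 2 * (m + 1) + 1 by ring, eval_zm_two_mul_add_one,
    eval_zm_two_mul_add_one, mul_add_one, eval_zm_two_mul_add_two]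
  refine ⟨fun ⟨h1, h2, _⟩ => ?_, fun h => by simp [h]⟩
  by_contra hE
  obtain rfl : a = 0 := by simpa [hE] using h1
  have : 2 * (m : ℂ) + 1 = 0 := by simpa [hE] using h2
  norm_cast at this

lemma mem_zeroLocus_Jm_two_mul_add_one_iff {m : ℕ} {x : Fin 2 → ℂ} :
    x ∈ zeroLocus ℂ (Jm (2 * m + 1)) ↔
      ∃ i < m, x = ![4 * (2 * (i : ℂ) + 1), 0] ∨ x = ![-4 * (2 * (i : ℂ) + 1), 0] := by
  constructor
  · intro hx
    have hx' : x = ![x 0, 0] := by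
      ext i; fin_cases i
      · rfl
      · exact eval_snd_eq_zero_of_mem_zeroLocus_Jm hx
    rw [hx', vec_zero_mem_zeroLocus_Jm_two_mul_add_one_iff,
      eval_zm_two_mul_eq_zero_iff] at hx
    obtain ⟨i, hi, h | h⟩ := hx
    · exact ⟨i, hi, .inl (by rw [hx', h])⟩
    · exact ⟨i, hi, .inr (by rw [hx', h])⟩
  · rintro ⟨i, hi, rfl | rfl⟩ <;>
      rw [vec_zero_mem_zeroLocus_Jm_two_mul_add_one_iff, eval_zm_two_mul_eq_zero_iff] <;>
      exact ⟨i, hi, by simp⟩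

theorem isUnit_mod_Jm_iff_general (g : ℕ) (hodd : Odd g) (f : MvPolynomial (Fin 2) ℂ) :
    IsUnit (Ideal.Quotient.mk (Jm g) f) ↔
      ∀ j : ℕ, 1 ≤ j → j ≤ (g - 1) / 2 →
        eval ![(4 * ((g : ℂ) - 2 * j) : ℂ), 0] f ≠ 0 ∧
        eval ![(-4 * ((g : ℂ) - 2 * j) : ℂ), 0] f ≠ 0 := by
  obtain ⟨m, rfl⟩ := hodd
  have hreindex : ∀ j ≤ m, ((2 * m + 1 : ℕ) : ℂ) - 2 * j = 2 * (m - j : ℕ) + 1 := by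
    intro j hj
    push_cast [hj]
    ring
  rw [isUnit_quotient_mk_iff_forall_mem_zeroLocus, show (2 * m + 1 - 1) / 2 = m by omega]
  simp only [mem_zeroLocus_Jm_two_mul_add_one_iff]
  constructor
  · intro h j _ hj
    rw [hreindex j hj]
    exact ⟨h _ ⟨m - j, by omega, .inl rfl⟩, h _ ⟨m - j, by omega, .inr rfl⟩⟩
  · rintro h x ⟨i, hi, hx⟩
    have hfi := h (m - i) (by omega) (by omega)
    rw [hreindex _ (by omega), Nat.sub_sub_self hi.le] at hfi
    rcases hx with rfl | rfl
    exacts [hfi.1, hfi.2]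

/-- For g ≥ 1 odd, f ∈ ℂ[α,γ] is a unit modulo J_g^- iff f(±4(g−2j), 0) ≠ 0 for
    every j = 1, …, (g−1)/2. -/
theorem isUnit_mod_Jm_iff (g : ℕ) (hg : 1 ≤ g) (hodd : Odd g) (f : MvPolynomial (Fin 2) ℂ) :
    IsUnit (Ideal.Quotient.mk (Jm g) f) ↔
      ∀ j : ℕ, 1 ≤ j → j ≤ (g - 1) / 2 →
        eval ![(4 * ((g : ℂ) - 2 * j) : ℂ), 0] f ≠ 0 ∧
        eval ![(-4 * ((g : ℂ) - 2 * j) : ℂ), 0] f ≠ 0 :=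
  isUnit_mod_Jm_iff_general g hodd f
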